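/- Let s be a schedule, x an object, n ≥ 3, and t1, …, tn pairwise distinct transactions such that the conflict graph of s contains the directed path of adjacent edges t1 → t2, t2 → t3, …, t_{n-1} → t_n, each edge on the same object x. Then at least one of the following holds: (i) the conflict graph of s contains a single edge t1 → t_n on x; (ii) the conflict graph of s contains the two adjacent edges t1 → t2 and t2 → t_n, each on x; or (iii) there exist two distinct transactions u and v among {t1, …, tn} such that the conflict graph of s contains both the edge u → v and the edge v → u, each on x (a 2-transaction conflict cycle on x). -/
import Mathlib


/-- The kind of an operation: read or write. -/
inductive OpKind where
  | read : OpKind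
  | write : OpKind
deriving DecidableEq

/-- An operation: a transaction identifier, an object identifier, and a kind. -/
structure Op where
  txn : ℕ
  obj : ℕ
  kind : OpKind

/-- The conflict graph of schedule `s` has an edge on object `x` from `t₁` to `t₂`:
some operation of `t₁` on `x` conflicts with a later-positioned operation of `t₂` on `x`. -/
def ConflictEdgeOn (s : List Op) (x t₁ t₂ : ℕ) : Prop :=
  ∃ (i j : ℕ) (p q : Op), i < j ∧ s[i]? = some p ∧ s[j]? = some q ∧
    p.txn = t₁ ∧ q.txn = t₂ ∧ t₁ ≠ t₂ ∧
    p.obj = x ∧ q.obj = x ∧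
    (p.kind = OpKind.write ∨ q.kind = OpKind.write)

lemma mkEdge {s : List Op} {x a b i j : ℕ} {p q : Op}
    (hij : i < j) (hp : s[i]? = some p) (hq : s[j]? = some q)
    (hpt : p.txn = a) (hqt : q.txn = b) (hne : a ≠ b)
    (hpo : p.obj = x) (hqo : q.obj = x)
    (hw : p.kind = OpKind.write ∨ q.kind = OpKind.write) :
    ConflictEdgeOn s x a b :=
  ⟨i, j, p, q, hij, hp, hq, hpt, hqt, hne, hpo, hqo, hw⟩

lemma op_eq_of_idx_eq {s : List Op} {i j : ℕ} {p q : Op}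
    (hp : s[i]? = some p) (hq : s[j]? = some q) (hij : i = j) : p = q := by
  subst hij
  rw [hp] at hq
  exact Option.some.inj hq

/-- Key composition lemma: from three adjacent conflict edges `a→b→c→d` on the
same object, with `a,b,c,d` pairwise distinct, we get `a→d`, or `b→d`, or a
2-cycle between two of them. -/
lemma key_compose {s : List Op} {x a b c d : ℕ}
    (had : a ≠ d) (hac : a ≠ c) (hbc : b ≠ c) (hbd : b ≠ d) (hcd : c ≠ d)
    (e1 : ConflictEdgeOn s x a b) (e2 : ConflictEdgeOn s x b c)
    (e3 : ConflictEdgeOn s x c d) :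
    ConflictEdgeOn s x a d ∨ ConflictEdgeOn s x b d ∨
    (ConflictEdgeOn s x a c ∧ ConflictEdgeOn s x c a) ∨
    (ConflictEdgeOn s x b c ∧ ConflictEdgeOn s x c b) ∨
    (ConflictEdgeOn s x c d ∧ ConflictEdgeOn s x d c) := by
  obtain ⟨i1, j1, α, β, h1, hα, hβ, hαt, hβt, -, hαo, hβo, hw1⟩ := e1
  obtain ⟨i2, j2, γ, δ, h2, hγ, hδ, hγt, hδt, -, hγo, hδo, hw2⟩ := e2
  obtain ⟨i3, j3, ε, ζ, h3, hε, hζ, hεt, hζt, -, hεo, hζo, hw3⟩ := e3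
  rcases hw3 with hwε | hwζ
  · -- ε (an op of c) is a write
    rcases hw1 with hwα | hwβ
    · -- α (an op of a) is a write
      rcases hw2 with hwγ | hwδ
      · -- γ (an op of b) is a write
        rcases Nat.lt_trichotomy i2 j3 with h | h | h
        · exact Or.inr (Or.inl (mkEdge h hγ hζ hγt hζt hbd hγo hζo (Or.inl hwγ)))
        · have := op_eq_of_idx_eq hγ hζ h
          exact absurd (by rw [← hγt, ← hζt, this]) hbd
        · -- j3 < i2, so ε (write of c) at i3 < j3 < i2 precedes γ (op of b)
          refine Or.inr (Or.inr (Or.inr (Or.inl ⟨?_, ?_⟩)))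
          · exact mkEdge h2 hγ hδ hγt hδt hbc hγo hδo (Or.inl hwγ)
          · exact mkEdge (by omega) hε hγ hεt hγt (Ne.symm hbc) hεo hγo (Or.inl hwε)
      · -- δ (an op of c) is a write
        rcases Nat.lt_trichotomy i1 j3 with h | h | h
        · exact Or.inl (mkEdge h hα hζ hαt hζt had hαo hζo (Or.inl hwα))
        · have := op_eq_of_idx_eq hα hζ h
          exact absurd (by rw [← hαt, ← hζt, this]) had
        · -- j3 < i1
          rcases Nat.lt_trichotomy i1 j2 with h' | h' | h'
          · -- a→c via α (write) before δ, and c→a via ε (write) before α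
            refine Or.inr (Or.inr (Or.inl ⟨?_, ?_⟩))
            · exact mkEdge h' hα hδ hαt hδt hac hαo hδo (Or.inl hwα)
            · exact mkEdge (by omega) hε hα hεt hαt (Ne.symm hac) hεo hαo (Or.inl hwε)
          · have := op_eq_of_idx_eq hα hδ h'
            exact absurd (by rw [← hαt, ← hδt, this]) hac
          · -- j2 < i1 < j1 : δ (write of c) before β (op of b)
            refine Or.inr (Or.inr (Or.inr (Or.inl ⟨?_, ?_⟩)))
            · exact mkEdge h2 hγ hδ hγt hδt hbc hγo hδo (Or.inr hwδ)
            · exact mkEdge (by omega) hδ hβ hδt hβt (Ne.symm hbc) hδo hβo (Or.inl hwδ)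
    · -- β (an op of b) is a write
      rcases Nat.lt_trichotomy j1 j3 with h | h | h
      · exact Or.inr (Or.inl (mkEdge h hβ hζ hβt hζt hbd hβo hζo (Or.inl hwβ)))
      · have := op_eq_of_idx_eq hβ hζ h
        exact absurd (by rw [← hβt, ← hζt, this]) hbd
      · -- j3 < j1, so ε (write of c) at i3 < j3 < j1 precedes β (op of b)
        refine Or.inr (Or.inr (Or.inr (Or.inl ⟨?_, ?_⟩)))
        · exact mkEdge h2 hγ hδ hγt hδt hbc hγo hδo hw2
        · exact mkEdge (by omega) hε hβ hεt hβt (Ne.symm hbc) hεo hβo (Or.inl hwε)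
  · -- ζ (an op of d) is a write
    rcases Nat.lt_trichotomy i1 j3 with h | h | h
    · exact Or.inl (mkEdge h hα hζ hαt hζt had hαo hζo (Or.inr hwζ))
    · have := op_eq_of_idx_eq hα hζ h
      exact absurd (by rw [← hαt, ← hζt, this]) had
    · rcases Nat.lt_trichotomy i2 j3 with h' | h' | h'
      · exact Or.inr (Or.inl (mkEdge h' hγ hζ hγt hζt hbd hγo hζo (Or.inr hwζ)))
      · have := op_eq_of_idx_eq hγ hζ h'
        exact absurd (by rw [← hγt, ← hζt, this]) hbd
      · -- j3 < i2 < j2 : ζ (write of d) precedes δ (op of c)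
        refine Or.inr (Or.inr (Or.inr (Or.inr ⟨?_, ?_⟩)))
        · exact mkEdge h3 hε hζ hεt hζt hcd hεo hζo (Or.inr hwζ)
        · exact mkEdge (by omega) hζ hδ hζt hδt (Ne.symm hcd) hζo hδo (Or.inl hwζ)

/-- A path of `n ≥ 3` adjacent conflict edges all on the same object `x` can be
reduced to one edge, to two adjacent edges, or else yields a 2-transaction
conflict cycle on `x`. -/
theorem adjacent_edges_same_object_reduce
    (s : List Op) (x : ℕ) (n : ℕ) (hn : 3 ≤ n)
    (t : Fin n → ℕ) (hinj : Function.Injective t)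
    (hpath : ∀ (k : ℕ) (h : k + 1 < n),
      ConflictEdgeOn s x (t ⟨k, by omega⟩) (t ⟨k + 1, h⟩)) :
    ConflictEdgeOn s x (t ⟨0, by omega⟩) (t ⟨n - 1, by omega⟩) ∨
    (ConflictEdgeOn s x (t ⟨0, by omega⟩) (t ⟨1, by omega⟩) ∧
      ConflictEdgeOn s x (t ⟨1, by omega⟩) (t ⟨n - 1, by omega⟩)) ∨
    (∃ u v : ℕ, u ≠ v ∧ (∃ k : Fin n, t k = u) ∧ (∃ k : Fin n, t k = v) ∧
      ConflictEdgeOn s x u v ∧ ConflictEdgeOn s x v u) := by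
  induction n, hn using Nat.le_induction with
  | base =>
    exact Or.inr (Or.inl ⟨hpath 0 (by omega), hpath 1 (by omega)⟩)
  | succ n hn IH =>
    -- distinctness helper
    have hne : ∀ (i j : Fin (n + 1)), (i : ℕ) ≠ (j : ℕ) → t i ≠ t j := by
      intro i j hij he
      exact hij (congrArg Fin.val (hinj he))
    set t' : Fin n → ℕ := fun k => t k.succ with ht'
    have hinj' : Function.Injective t' := by
      intro a b h
      exact Fin.succ_injective _ (hinj h)
    have hpath' : ∀ (k : ℕ) (h : k + 1 < n),
        ConflictEdgeOn s x (t' ⟨k, by omega⟩) (t' ⟨k + 1, h⟩) := by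
      intro k h
      exact hpath (k + 1) (by omega)
    have key_eq : t' ⟨n - 1, by omega⟩ = t ⟨n, by omega⟩ := by
      show t (Fin.succ ⟨n - 1, by omega⟩) = t ⟨n, by omega⟩
      congr 1
      apply Fin.ext
      show (n - 1) + 1 = n
      omega
    rcases IH t' hinj' hpath' with h1 | ⟨h2a, h2b⟩ | ⟨u, v, huv, ⟨k, hk⟩, ⟨k', hk'⟩, c1, c2⟩
    · -- edge t⟨1⟩ → t⟨n⟩ : gives conclusion (ii)
      rw [key_eq] at h1
      exact Or.inr (Or.inl ⟨hpath 0 (by omega), h1⟩)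
    · -- edges t⟨1⟩→t⟨2⟩ and t⟨2⟩→t⟨n⟩
      rw [key_eq] at h2b
      have e1 : ConflictEdgeOn s x (t ⟨0, by omega⟩) (t ⟨1, by omega⟩) :=
        hpath 0 (by omega)
      have e2 : ConflictEdgeOn s x (t ⟨1, by omega⟩) (t ⟨2, by omega⟩) := h2a
      have e3 : ConflictEdgeOn s x (t ⟨2, by omega⟩) (t ⟨n, by omega⟩) := h2b
      have had := hne ⟨0, by omega⟩ ⟨n, by omega⟩ (by simp; omega)
      have hac := hne ⟨0, by omega⟩ ⟨2, by omega⟩ (by simp)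
      have hbc := hne ⟨1, by omega⟩ ⟨2, by omega⟩ (by simp)
      have hbd := hne ⟨1, by omega⟩ ⟨n, by omega⟩ (by simp; omega)
      have hcd := hne ⟨2, by omega⟩ ⟨n, by omega⟩ (by simp; omega)
      rcases key_compose had hac hbc hbd hcd e1 e2 e3 with
        h | h | ⟨ha, hb⟩ | ⟨ha, hb⟩ | ⟨ha, hb⟩
      · exact Or.inl h
      · exact Or.inr (Or.inl ⟨e1, h⟩)
      · exact Or.inr (Or.inr ⟨_, _, hac, ⟨⟨0, by omega⟩, rfl⟩, ⟨⟨2, by omega⟩, rfl⟩, ha, hb⟩)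
      · exact Or.inr (Or.inr ⟨_, _, hbc, ⟨⟨1, by omega⟩, rfl⟩, ⟨⟨2, by omega⟩, rfl⟩, ha, hb⟩)
      · exact Or.inr (Or.inr ⟨_, _, hcd, ⟨⟨2, by omega⟩, rfl⟩, ⟨⟨n, by omega⟩, rfl⟩, ha, hb⟩)
    · -- a 2-cycle among the later transactions lifts
      exact Or.inr (Or.inr ⟨u, v, huv, ⟨k.succ, hk⟩, ⟨k'.succ, hk'⟩, c1, c2⟩)
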